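/- Let p ≥ 1 and n ≥ 1 be integers, q a nonzero integer, and m an integer with m ≥ (2n-1)p. Let Γ = ⟨a, b, t ∣ t a^p t⁻¹ = b⁻¹ a^p, t b^{-q} a⁻¹ t⁻¹ = b^{-q}, t^m [b^q, a^p]^n = 1⟩, with commutator convention [x,y] = x⁻¹y⁻¹xy and integer powers interpreted as zpow. Then the identity element 1 of Γ lies in ⟨⟨t⟩⟩⁺, i.e., 1 is a non-empty finite product of conjugates of t; consequently, if t ≠ 1 in Γ, then t is a generalized torsion element of Γ. -/
import Mathlib


/-- `g` is a generalized torsion element of `G`: `g ≠ 1` and some non-empty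
finite product of conjugates of `g` equals `1`. -/
def IsGeneralizedTorsion {G : Type*} [Group G] (g : G) : Prop :=
  g ≠ 1 ∧ ∃ xs : List G, xs ≠ [] ∧ (xs.map (fun x => x * g * x⁻¹)).prod = 1

/-- `⟨⟨g⟩⟩⁺`: the set of all non-empty finite products of conjugates of `g`. -/
def conjProdSet {G : Type*} [Group G] (g : G) : Set G :=
  {a | ∃ xs : List G, xs ≠ [] ∧ (xs.map (fun x => x * g * x⁻¹)).prod = a}

/-- The commutator, with the convention `[x,y] = x⁻¹y⁻¹xy`. -/
def com {G : Type*} [Group G] (x y : G) : G := x⁻¹ * y⁻¹ * x * y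

/-- Relators of the presentation
`⟨a, b, t ∣ t a^p t⁻¹ = b⁻¹ a^p, t b^{-q} a⁻¹ t⁻¹ = b^{-q}, t^m [b^q,a^p]^n = 1⟩`
of `π₁(K(m/n))` for `m/n`-surgery on the genus one two-bridge knot
`K = C[2p, 2q]`; generator `0` is `a`, generator `1` is `b`, generator `2` is
`t` (the meridian), and `[b^q, a^p]` is the longitude. -/
def surgeryRels (p q m n : ℤ) : Set (FreeGroup (Fin 3)) :=
  { FreeGroup.of 2 * FreeGroup.of 0 ^ p * (FreeGroup.of 2)⁻¹ *
      ((FreeGroup.of 1)⁻¹ * FreeGroup.of 0 ^ p)⁻¹,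
    FreeGroup.of 2 * FreeGroup.of 1 ^ (-q) * (FreeGroup.of 0)⁻¹ *
      (FreeGroup.of 2)⁻¹ * (FreeGroup.of 1 ^ (-q))⁻¹,
    FreeGroup.of 2 ^ m *
      ((FreeGroup.of 1 ^ q)⁻¹ * (FreeGroup.of 0 ^ p)⁻¹ *
        FreeGroup.of 1 ^ q * FreeGroup.of 0 ^ p) ^ n }

section Aux

variable {G : Type*} [Group G]

theorem conjProdSet.self_mem (t : G) : t ∈ conjProdSet t :=
  ⟨[1], by simp, by simp⟩

theorem conjProdSet.mul_mem {t x y : G} (hx : x ∈ conjProdSet t)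
    (hy : y ∈ conjProdSet t) : x * y ∈ conjProdSet t := by
  obtain ⟨xs, hxs, rfl⟩ := hx
  obtain ⟨ys, hys, rfl⟩ := hy
  refine ⟨xs ++ ys, ?_, by simp⟩
  simp [hxs]

private theorem prod_conj_eq (g t : G) (xs : List G) :
    ((xs.map (fun y => g * y)).map (fun x => x * t * x⁻¹)).prod
      = g * (xs.map (fun x => x * t * x⁻¹)).prod * g⁻¹ := by
  induction xs with
  | nil => simp
  | cons z zs ih =>
      simp only [List.map_cons, List.prod_cons, ih]
      group

theorem conjProdSet.conj_mem {t x : G} (g : G) (hx : x ∈ conjProdSet t) :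
    g * x * g⁻¹ ∈ conjProdSet t := by
  obtain ⟨xs, hxs, rfl⟩ := hx
  exact ⟨xs.map (fun y => g * y), fun h => hxs (by simpa using h), prod_conj_eq g t xs⟩

theorem conjProdSet.pow_mem (t : G) (k : ℕ) (hk : 1 ≤ k) : t ^ k ∈ conjProdSet t := by
  induction k with
  | zero => omega
  | succ k ih =>
      rcases Nat.eq_zero_or_pos k with h | h
      · subst h; simpa using conjProdSet.self_mem t
      · rw [pow_succ]
        exact conjProdSet.mul_mem (ih h) (conjProdSet.self_mem t)

theorem conjProdSet.pow_mul_mem (t : G) {s : G} (hs : s ∈ conjProdSet t) (r : ℕ) :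
    t ^ r * s ∈ conjProdSet t := by
  cases r with
  | zero => simpa using hs
  | succ r => exact conjProdSet.mul_mem (conjProdSet.pow_mem t (r+1) (by omega)) hs

private theorem conj_pow_eq (g x : G) (k : ℕ) : (g * x * g⁻¹) ^ k = g * x ^ k * g⁻¹ := by
  induction k with
  | zero => simp
  | succ k ih => rw [pow_succ, pow_succ, ih]; group

theorem conjProdSet.absorb {t v : G} (hv : v ∈ conjProdSet t) (k : ℕ) :
    t ^ (k+1) * (t⁻¹ * v) ^ (k+1) ∈ conjProdSet t := by
  induction k with
  | zero => simpa using hv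
  | succ k ih =>
      have key : t ^ (k+1+1) * (t⁻¹ * v) ^ (k+1+1)
          = (t ^ (k+1) * v * (t ^ (k+1))⁻¹) * (t ^ (k+1) * (t⁻¹ * v) ^ (k+1)) := by
        rw [pow_succ' (t⁻¹ * v) (k+1)]
        generalize (t⁻¹ * v) ^ (k+1) = X
        group
      rw [key]
      exact conjProdSet.mul_mem (conjProdSet.conj_mem _ hv) ih

end Aux

theorem core_lemma {G : Type*} [Group G] (t B a : G) (P' N' M : ℕ)
    (hM : (P'+1) * (2*N'+1) ≤ M)
    (ha : a = t⁻¹ * (B * t * B⁻¹))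
    (hrel : t ^ M * (B⁻¹ * (a ^ (P'+1))⁻¹ * B * a ^ (P'+1)) ^ (N'+1) = 1) :
    (1 : G) ∈ conjProdSet t := by
  set v : G := B * t * B⁻¹ with hv
  set v' : G := B⁻¹ * t * B with hv'
  have hvS : v ∈ conjProdSet t := by
    rw [hv]; exact conjProdSet.conj_mem B (conjProdSet.self_mem t)
  have hv'S : v' ∈ conjProdSet t := by
    rw [hv']
    have := conjProdSet.conj_mem B⁻¹ (conjProdSet.self_mem t)
    rwa [inv_inv] at this
  have hA : a ^ (P'+1) = (t⁻¹ * v) ^ (P'+1) := by rw [ha]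
  have hd : B⁻¹ * (a ^ (P'+1))⁻¹ * B = (t⁻¹ * v') ^ (P'+1) := by
    have h1 : B⁻¹ * a⁻¹ * (B⁻¹)⁻¹ = t⁻¹ * v' := by rw [ha, hv, hv']; group
    calc B⁻¹ * (a ^ (P'+1))⁻¹ * B
        = B⁻¹ * (a⁻¹) ^ (P'+1) * (B⁻¹)⁻¹ := by rw [inv_pow, inv_inv]
      _ = (B⁻¹ * a⁻¹ * (B⁻¹)⁻¹) ^ (P'+1) := (conj_pow_eq _ _ _).symm
      _ = (t⁻¹ * v') ^ (P'+1) := by rw [h1]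
  set d : G := (t⁻¹ * v') ^ (P'+1) with hdd
  set e : G := (t⁻¹ * v) ^ (P'+1) with hee
  have hrel' : t ^ M * (d * e) ^ (N'+1) = 1 := by
    have hin : B⁻¹ * (a ^ (P'+1))⁻¹ * B * a ^ (P'+1) = d * e := by rw [hd, hA]
    rwa [hin] at hrel
  set T : G := t ^ (P'+1) with hT
  have hs1 : T * d ∈ conjProdSet t := by
    rw [hT, hdd]; exact conjProdSet.absorb hv'S P'
  have hs2 : T * e ∈ conjProdSet t := by
    rw [hT, hee]; exact conjProdSet.absorb hvS P'
  have phase1 : ∀ k : ℕ, T ^ (2*k+1) * (d*e) ^ k * d ∈ conjProdSet t := by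
    intro k
    induction k with
    | zero => simpa using hs1
    | succ k ih =>
        have key : T ^ (2*(k+1)+1) * (d*e) ^ (k+1) * d
            = (T ^ (2*k+2) * (T * d) * (T ^ (2*k+2))⁻¹)
              * ((T ^ (2*k+1) * (T * e) * (T ^ (2*k+1))⁻¹)
                * (T ^ (2*k+1) * (d*e) ^ k * d)) := by
          rw [pow_succ' (d*e) k]
          generalize (d*e) ^ k = Y
          group
        rw [key]
        exact conjProdSet.mul_mem (conjProdSet.conj_mem _ hs1)
          (conjProdSet.mul_mem (conjProdSet.conj_mem _ hs2) ih)
  have hWmem : t ^ M * (d*e) ^ N' * d ∈ conjProdSet t := by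
    have h1 : t ^ M = t ^ (M - (P'+1)*(2*N'+1)) * T ^ (2*N'+1) := by
      rw [hT, ← pow_mul, ← pow_add, Nat.sub_add_cancel hM]
    rw [h1, mul_assoc, mul_assoc]
    refine conjProdSet.pow_mul_mem t ?_ _
    have := phase1 N'
    rwa [mul_assoc] at this
  have hWe : (t ^ M * (d*e) ^ N' * d) * e = 1 := by
    have h2 : (t ^ M * (d*e) ^ N' * d) * e = t ^ M * (d*e) ^ (N'+1) := by
      rw [pow_succ (d*e) N']
      generalize (d*e) ^ N' = Y
      group
    rw [h2, hrel']
  have he : e⁻¹ = t ^ M * (d*e) ^ N' * d := inv_eq_of_mul_eq_one_left hWe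
  have hdS : d ∈ conjProdSet t := by
    have h4 : B⁻¹ * e⁻¹ * B = d := by rw [← hA]; exact hd
    have h3 : d = B⁻¹ * (t ^ M * (d*e) ^ N' * d) * B := by rw [← he]; exact h4.symm
    rw [h3]
    have := conjProdSet.conj_mem B⁻¹ hWmem
    rwa [inv_inv] at this
  have phase2 : ∀ k : ℕ, T ^ (k+1) * (d*e) ^ (k+1) ∈ conjProdSet t := by
    intro k
    induction k with
    | zero =>
        have key : T ^ 1 * (d*e) ^ 1 = (T * d * T⁻¹) * (T * e) := by
          rw [pow_one, pow_one]; group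
        rw [key]
        exact conjProdSet.mul_mem (conjProdSet.conj_mem T hdS) hs2
    | succ k ih =>
        have key : T ^ (k+1+1) * (d*e) ^ (k+1+1)
            = (T ^ (k+2) * d * (T ^ (k+2))⁻¹)
              * ((T ^ (k+1) * (T * e) * (T ^ (k+1))⁻¹) * (T ^ (k+1) * (d*e) ^ (k+1))) := by
          rw [pow_succ' (d*e) (k+1)]
          generalize (d*e) ^ (k+1) = Y
          group
        rw [key]
        exact conjProdSet.mul_mem (conjProdSet.conj_mem _ hdS)
          (conjProdSet.mul_mem (conjProdSet.conj_mem _ hs2) ih)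
  have hM2 : (P'+1) * (N'+1) ≤ M :=
    le_trans (Nat.mul_le_mul le_rfl (by omega)) hM
  have h1 : t ^ M = t ^ (M - (P'+1)*(N'+1)) * T ^ (N'+1) := by
    rw [hT, ← pow_mul, ← pow_add, Nat.sub_add_cancel hM2]
  have hfin : (1:G) = t ^ (M - (P'+1)*(N'+1)) * (T ^ (N'+1) * (d*e) ^ (N'+1)) := by
    rw [← hrel', h1, mul_assoc]
  rw [hfin]
  exact conjProdSet.pow_mul_mem t (phase2 N') _

/-- Theorem 1.5(1): for `p ≥ 1`, `q ≠ 0`, `n ≥ 1` and `m ≥ (2n-1)p`, in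
`Γ = π₁(K(m/n))` for `K = C[2p, 2q]` the identity lies in `⟨⟨t⟩⟩⁺`;
consequently, if `t ≠ 1` then the meridian `t` is a generalized torsion
element of `Γ`. -/
theorem genus_one_two_bridge_surgery_positive (p q m n : ℤ)
    (hp : 1 ≤ p) (hq : q ≠ 0) (hn : 1 ≤ n) (hm : (2 * n - 1) * p ≤ m) :
    letI t : PresentedGroup (surgeryRels p q m n) := PresentedGroup.of 2
    (1 : PresentedGroup (surgeryRels p q m n)) ∈ conjProdSet t ∧
    (t ≠ 1 → IsGeneralizedTorsion t) := by
  have hm0 : (0:ℤ) ≤ m :=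
    le_trans (le_of_lt (mul_pos (by linarith) (by linarith))) hm
  obtain ⟨P, rfl⟩ : ∃ P : ℕ, p = (P:ℤ) := ⟨p.toNat, (Int.toNat_of_nonneg (by linarith)).symm⟩
  obtain ⟨N, rfl⟩ : ∃ N : ℕ, n = (N:ℤ) := ⟨n.toNat, (Int.toNat_of_nonneg (by linarith)).symm⟩
  obtain ⟨M, rfl⟩ : ∃ M : ℕ, m = (M:ℤ) := ⟨m.toNat, (Int.toNat_of_nonneg hm0).symm⟩
  have hP1 : 1 ≤ P := by exact_mod_cast hp
  have hN1 : 1 ≤ N := by exact_mod_cast hn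
  obtain ⟨P', rfl⟩ : ∃ P' : ℕ, P = P' + 1 := ⟨P - 1, by omega⟩
  obtain ⟨N', rfl⟩ : ∃ N' : ℕ, N = N' + 1 := ⟨N - 1, by omega⟩
  have hMn : (P'+1) * (2*N'+1) ≤ M := by
    zify
    push_cast at hm
    nlinarith [hm]
  set rels := surgeryRels (↑(P'+1)) q (↑M) (↑(N'+1)) with hrels
  set t : PresentedGroup rels := PresentedGroup.mk rels (FreeGroup.of 2) with ht
  set a : PresentedGroup rels := PresentedGroup.mk rels (FreeGroup.of 0) with haa
  set b : PresentedGroup rels := PresentedGroup.mk rels (FreeGroup.of 1) with hbb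
  have hrel_mem : ∀ r ∈ rels, PresentedGroup.mk rels r = 1 := fun r hr =>
    (QuotientGroup.eq_one_iff r).mpr (Subgroup.subset_normalClosure hr)
  have h2mem : (FreeGroup.of 2 * FreeGroup.of 1 ^ (-q) * (FreeGroup.of 0)⁻¹ *
      (FreeGroup.of 2)⁻¹ * (FreeGroup.of 1 ^ (-q))⁻¹) ∈ rels := by
    rw [hrels]
    exact Set.mem_insert_of_mem _ (Set.mem_insert _ _)
  have h3mem : (FreeGroup.of 2 ^ ((M:ℕ):ℤ) *
      ((FreeGroup.of 1 ^ q)⁻¹ * (FreeGroup.of 0 ^ (((P'+1):ℕ):ℤ))⁻¹ *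
        FreeGroup.of 1 ^ q * FreeGroup.of 0 ^ (((P'+1):ℕ):ℤ)) ^ (((N'+1):ℕ):ℤ)) ∈ rels := by
    rw [hrels]
    exact Set.mem_insert_of_mem _ (Set.mem_insert_of_mem _ rfl)
  have h2raw := hrel_mem _ h2mem
  have h3raw := hrel_mem _ h3mem
  simp only [map_mul, map_inv, map_zpow, map_pow, zpow_natCast] at h2raw h3raw
  rw [← ht, ← haa, ← hbb] at h2raw h3raw
  have ha : a = t⁻¹ * (b^q * t * (b^q)⁻¹) := by
    have e1 : a⁻¹ * (t⁻¹ * (b^q * t * (b^q)⁻¹))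
        = b^q * (t⁻¹ * (t * b^(-q) * a⁻¹ * t⁻¹ * (b^(-q))⁻¹) * t) * (b^q)⁻¹ := by
      group
    rw [h2raw] at e1
    have e2 : b^q * (t⁻¹ * (1 : PresentedGroup rels) * t) * (b^q)⁻¹ = 1 := by group
    rw [e2] at e1
    exact inv_mul_eq_one.mp e1
  have hone : (1 : PresentedGroup rels) ∈ conjProdSet t :=
    core_lemma t (b^q) a P' N' M hMn ha h3raw
  exact ⟨hone, fun hne => ⟨hne, hone⟩⟩
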